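/- arXiv:1401.5400 — 8 statements merged into one kernel-verified Lean document; each statement's English description precedes it below -/
import Mathlib

section
/- The determinant of the S×S matrix M with diagonal entries 1 and off-diagonal entries M_{ij} = -x_i (for i ≠ j) equals 1 - σ₂ - 2σ₃ - ... - (S-1)σ_S, i.e., det M = Σ_{j=0}^{S} (1-j)σ_j, where σ_j is the j-th elementary symmetric polynomial in x₁,...,x_S. -/
open Finset

/-- The j-th elementary symmetric polynomial of `x 0, ..., x (S-1)`. -/
def esym {R : Type*} [CommRing R] (S : ℕ) (x : Fin S → R) (j : ℕ) : R :=
  ∑ t ∈ Finset.univ.powersetCard j, ∏ i ∈ t, x i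

/-! `M = diagonal (1 + x) - x 𝟙ᵀ` is a rank-one perturbation of a diagonal matrix. The matrix
determinant lemma in its adjugate form, `det (A + u vᵀ) = det A + vᵀ adj(A) u`, holds over any
commutative ring and gives `det M = ∏ᵢ (1 + xᵢ) - ∑ᵢ xᵢ ∏_{j ≠ i} (1 + xⱼ)`. Expanding both
products over subsets `t`, the monomial `∏_{i ∈ t} xᵢ` appears once in the first term and `|t|`
times in the second, which gives `∑ⱼ (1 - j) σⱼ`. -/

namespace Matrix

variable {n R : Type*} [Fintype n] [DecidableEq n] [CommRing R]

theorem det_updateRow_eq_vecMul_adjugate (A : Matrix n n R) (i : n) (v : n → R) :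
    (A.updateRow i v).det = (v ᵥ* adjugate A) i := by
  rw [← det_transpose, ← updateCol_transpose, ← cramer_apply, cramer_eq_adjugate_mulVec,
    ← adjugate_transpose, mulVec_transpose]

theorem det_add_smul_rows (A : Matrix n n R) (u v : n → R) (s : Finset n) :
    (of fun i => if i ∈ s then A i + u i • v else A i).det
      = A.det + ∑ i ∈ s, u i * (A.updateRow i v).det := by
  induction s using Finset.induction_on with
  | empty => simp only [notMem_empty, if_false, sum_empty, add_zero]; rfl
  | insert a s ha ih =>
    set B : Matrix n n R := of fun i => if i ∈ s then A i + u i • v else A i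
    have hBa : B a = A a := if_neg ha
    have hinsert : (of fun i => if i ∈ insert a s then A i + u i • v else A i)
        = B.updateRow a (A a + u a • v) := by
      ext i j
      by_cases hi : i = a
      · subst hi; simp
      · simp [B, hi]
    -- adding multiples of row `a` (which is now `v`) to other rows does not change the determinant
    have hBv : (B.updateRow a v).det = (A.updateRow a v).det := by
      refine det_eq_of_forall_row_eq_smul_add_const (fun i => if i ∈ s then u i else 0) a
        (by simp [ha]) fun i j => ?_
      by_cases hi : i = a
      · subst hi; simp [ha]
      · by_cases his : i ∈ s <;> simp [B, hi, his, mul_comm]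
    rw [hinsert, det_updateRow_add, det_updateRow_smul, ← hBa, updateRow_eq_self, hBv,
      ih, sum_insert ha]
    ring

theorem det_add_vecMulVec (A : Matrix n n R) (u v : n → R) :
    (A + vecMulVec u v).det = A.det + v ⬝ᵥ (adjugate A *ᵥ u) := by
  have h := det_add_smul_rows A u v univ
  simp only [mem_univ, if_true, det_updateRow_eq_vecMul_adjugate] at h
  rw [dotProduct_mulVec, dotProduct_comm]
  convert h using 2
  · ext i j
    simp [vecMulVec_apply]
  · rfl

end Matrix

theorem Finset.sum_powerset_card_mul_prod {ι R : Type*} [DecidableEq ι] [CommRing R]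
    (s : Finset ι) (f : ι → R) :
    ∑ t ∈ s.powerset, (t.card : R) * ∏ i ∈ t, f i
      = ∑ i ∈ s, f i * ∏ j ∈ s.erase i, (1 + f j) := by
  calc ∑ t ∈ s.powerset, (t.card : R) * ∏ i ∈ t, f i
      = ∑ t ∈ s.powerset, ∑ _i ∈ t, ∏ j ∈ t, f j := by simp
    _ = ∑ i ∈ s, ∑ t ∈ (s.erase i).powerset.image (insert i), ∏ j ∈ t, f j := by
      refine sum_comm' fun t i => ?_
      simp only [mem_powerset, mem_image, subset_erase]
      constructor
      · rintro ⟨hts, hit⟩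
        exact ⟨⟨t.erase i, ⟨(erase_subset i t).trans hts, notMem_erase i t⟩, insert_erase hit⟩,
          hts hit⟩
      · rintro ⟨⟨t, ⟨hts, -⟩, rfl⟩, his⟩
        exact ⟨insert_subset his hts, mem_insert_self i t⟩
    _ = ∑ i ∈ s, f i * ∏ j ∈ s.erase i, (1 + f j) := by
      refine sum_congr rfl fun i _ => ?_
      have hi : ∀ t ∈ (s.erase i).powerset, i ∉ t :=
        fun t ht => notMem_mono (mem_powerset.mp ht) (notMem_erase i s)
      rw [prod_one_add, mul_sum, sum_image fun t ht t' ht' h =>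
        insert_erase_invOn.2.injOn (hi t ht) (hi t' ht') h]
      exact sum_congr rfl fun t ht => prod_insert (hi t ht)

theorem sum_powerset_univ_mul_prod_eq_sum_esym {R : Type*} [CommRing R] {S : ℕ} (x : Fin S → R)
    (g : ℕ → R) :
    ∑ t ∈ (univ : Finset (Fin S)).powerset, g t.card * ∏ i ∈ t, x i
      = ∑ j ∈ range (S + 1), g j * esym S x j := by
  rw [sum_powerset, card_univ, Fintype.card_fin]
  refine sum_congr rfl fun j _ => ?_
  rw [esym, mul_sum]
  exact sum_congr rfl fun t ht => by rw [(mem_powersetCard.mp ht).2]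

theorem stmt0_general {R : Type*} [CommRing R] (S : ℕ) (x : Fin S → R)
    (M : Matrix (Fin S) (Fin S) R)
    (hM : ∀ i j, M i j = if i = j then 1 else - x i) :
    M.det = ∑ j ∈ Finset.range (S + 1), (1 - (j : R)) * esym S x j := by
  have hM_eq : M = Matrix.diagonal (1 + x) + Matrix.vecMulVec (-x) 1 := by
    ext i j
    by_cases hij : i = j
    · subst hij; simp [hM]
    · simp [hM, hij]
  have hexpand : M.det = ∏ i, (1 + x i) - ∑ i, x i * ∏ j ∈ univ.erase i, (1 + x j) := by
    rw [hM_eq, Matrix.det_add_vecMulVec, Matrix.adjugate_diagonal, Matrix.det_diagonal]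
    simp [Matrix.mulVec_diagonal, dotProduct, sub_eq_add_neg, mul_comm]
  rw [hexpand, prod_one_add, ← sum_powerset_card_mul_prod, ← sum_sub_distrib,
    ← sum_powerset_univ_mul_prod_eq_sum_esym x fun j => 1 - (j : R)]
  exact sum_congr rfl fun t _ => by ring

theorem stmt0 {R : Type*} [CommRing R] (S : ℕ) (hS : 1 ≤ S) (x : Fin S → R)
    (M : Matrix (Fin S) (Fin S) R)
    (hM : ∀ i j, M i j = if i = j then 1 else - x i) :
    M.det = ∑ j ∈ Finset.range (S + 1), (1 - (j : R)) * esym S x j :=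
  stmt0_general S x M hM
end

section
/- For every natural number n, Σ_{k=0}^{n} C(n,k)³ = Σ_{k=⌈n/2⌉}^{n} C(n,k)² · C(2k,n). -/
/-!
Expand `C(2k, n) = ∑ⱼ C(k, j) C(k, n - j)` by Vandermonde. The subset-of-a-subset identity
`C(n, k) C(k, n - j) = C(n, j) C(j, n - k)`, applied to both factors, turns the summand into
`C(n, j)² C(n - j, n - k) C(j, n - k)`; after swapping the two sums, the sum over `k` is again
Vandermonde and equals `C(n, j)`.
-/

open Finset

namespace Nat

theorem sum_range_choose_mul_choose_sub (m p n : ℕ) :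
    ∑ j ∈ range (n + 1), m.choose j * p.choose (n - j) = (m + p).choose n := by
  rw [add_choose_eq, Finset.Nat.sum_antidiagonal_eq_sum_range_succ_mk]

theorem sum_range_choose_mul_choose_of_le {a b N : ℕ} (hb : b ≤ N) :
    ∑ i ∈ range (N + 1), a.choose i * b.choose i = (a + b).choose a := by
  have hsub : range (b + 1) ⊆ range (N + 1) := range_subset_range.mpr (by omega)
  rw [← sum_subset hsub fun i _ hi => by
    rw [choose_eq_zero_of_lt (n := b) (by simpa using hi), mul_zero]]
  rw [choose_symm_add, ← sum_range_choose_mul_choose_sub]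
  refine sum_congr rfl fun i hi => ?_
  rw [choose_symm (mem_range_succ_iff.mp hi)]

theorem choose_mul_choose_sub {n j k : ℕ} (hj : j ≤ n) (hk : k ≤ n) :
    n.choose k * k.choose (n - j) = n.choose j * j.choose (n - k) := by
  rcases lt_or_ge k (n - j) with hlt | hle
  · rw [choose_eq_zero_of_lt hlt, choose_eq_zero_of_lt (by omega : j < n - k), mul_zero, mul_zero]
  · rw [choose_mul hle, choose_symm_of_eq_add (by omega : n = n - j + j), Nat.sub_sub_self hj,
      ← choose_symm (by omega : k - (n - j) ≤ j), (by omega : j - (k - (n - j)) = n - k)]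

theorem sum_range_choose_mul_choose_mul_choose_mul_choose {n j : ℕ} (hj : j ≤ n) :
    ∑ k ∈ range (n + 1), n.choose k * k.choose j * (n.choose k * k.choose (n - j)) =
      n.choose j ^ 3 := by
  have hterm : ∀ k ∈ range (n + 1),
      n.choose k * k.choose j * (n.choose k * k.choose (n - j)) =
        n.choose j ^ 2 * ((n - j).choose (n - k) * j.choose (n - k)) := by
    intro k hk
    replace hk := mem_range_succ_iff.mp hk
    have hfirst : n.choose k * k.choose j = n.choose j * (n - j).choose (n - k) := by
      conv_lhs => rw [← Nat.sub_sub_self hj]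
      rw [choose_mul_choose_sub (Nat.sub_le n j) hk, choose_symm hj]
    rw [hfirst, choose_mul_choose_sub hj hk]
    ring
  have hreflect : ∑ k ∈ range (n + 1), (n - j).choose (n - k) * j.choose (n - k) =
      ∑ i ∈ range (n + 1), (n - j).choose i * j.choose i := by
    simpa using sum_range_reflect (fun i => (n - j).choose i * j.choose i) (n + 1)
  rw [sum_congr rfl hterm, ← mul_sum, hreflect, sum_range_choose_mul_choose_of_le hj,
    Nat.sub_add_cancel hj, choose_symm hj]
  ring

end Nat

theorem sum_Icc_half_mul_choose_two_mul (f : ℕ → ℕ) (n : ℕ) :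
    ∑ k ∈ Icc ((n + 1) / 2) n, f k * (2 * k).choose n =
      ∑ k ∈ range (n + 1), f k * (2 * k).choose n := by
  refine sum_subset (fun k hk => by simp at hk ⊢; omega) fun k hk hk' => ?_
  have : 2 * k < n := by simp at hk hk'; omega
  rw [Nat.choose_eq_zero_of_lt this, mul_zero]

theorem stmt5 (n : ℕ) :
    ∑ k ∈ Finset.range (n + 1), (n.choose k) ^ 3 =
      ∑ k ∈ Finset.Icc ((n + 1) / 2) n, (n.choose k) ^ 2 * ((2 * k).choose n) := by
  rw [sum_Icc_half_mul_choose_two_mul]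
  calc ∑ j ∈ range (n + 1), n.choose j ^ 3
      = ∑ j ∈ range (n + 1), ∑ k ∈ range (n + 1),
          n.choose k * k.choose j * (n.choose k * k.choose (n - j)) :=
        sum_congr rfl fun j hj =>
          (Nat.sum_range_choose_mul_choose_mul_choose_mul_choose (mem_range_succ_iff.mp hj)).symm
    _ = ∑ k ∈ range (n + 1), ∑ j ∈ range (n + 1),
          n.choose k * k.choose j * (n.choose k * k.choose (n - j)) := sum_comm
    _ = ∑ k ∈ range (n + 1), n.choose k ^ 2 * (2 * k).choose n := by
        refine sum_congr rfl fun k _ => ?_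
        rw [two_mul, ← Nat.sum_range_choose_mul_choose_sub, mul_sum]
        exact sum_congr rfl fun j _ => by ring
end

section
/- For every natural number n, Σ_{k=0}^{n} C(n,k)³ = (1/2^n) · Σ_{k=⌈n/2⌉}^{n} C(2k,n) · C(2k,k) · C(2n-2k,n-k), i.e., 2^n · Σ_{k=0}^{n} C(n,k)³ = Σ_{k=0}^{n} C(2k,n) · C(2k,k) · C(2n-2k,n-k). -/
/-!
Both sides, as functions of `n`, satisfy the recurrence
`(n + 2)² u(n + 2) = 2 (7n² + 21n + 16) u(n + 1) + 32 (n + 1)² u(n)` and agree at `n = 0, 1`.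
For the left side this is Franel's recurrence for `∑ C(n,k)³`, rescaled by `2ⁿ`. Both
recurrences are proved by creative telescoping: for the summand `F` there is a rational function
`R` with `a F(n+2,k) - b F(n+1,k) - c F(n,k) = R(n,k+1) F(n+2,k+1) - R(n,k) F(n+2,k)`,
and summing over `k` makes the right-hand side telescope to zero.
-/

open Finset

namespace Nat

variable {K : Type*} [Field K] [CharZero K]

theorem cast_choose_succ_right (n k : ℕ) :
    (n.choose (k + 1) : K) = n.choose k * (n - k) / (k + 1) := by
  rw [eq_div_iff (Nat.cast_add_one_ne_zero k)]
  rcases le_or_gt k n with hk | hk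
  · rw [← Nat.cast_sub hk]
    exact_mod_cast choose_succ_right_eq n k
  · simp [choose_eq_zero_of_lt hk, choose_eq_zero_of_lt (hk.trans (lt_succ_self k))]

theorem cast_choose_eq_choose_succ (n k : ℕ) :
    (n.choose k : K) = (n + 1).choose k * (n + 1 - k) / (n + 1) := by
  rw [eq_div_iff (Nat.cast_add_one_ne_zero n)]
  rcases le_or_gt k (n + 1) with hk | hk
  · rw [← Nat.cast_add_one, ← Nat.cast_sub hk]
    exact_mod_cast choose_mul_succ_eq n k
  · simp [choose_eq_zero_of_lt hk, choose_eq_zero_of_lt ((lt_succ_self n).trans hk)]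

theorem cast_choose_add_two_add_two (n k : ℕ) :
    ((n + 2).choose (k + 2) : K) = n.choose k * (n + 2) * (n + 1) / ((k + 2) * (k + 1)) := by
  have hk : ((k + 2) * (k + 1) : K) ≠ 0 :=
    mul_ne_zero (by exact_mod_cast (k + 1).succ_ne_zero) (Nat.cast_add_one_ne_zero k)
  rw [eq_div_iff hk]
  have h₁ : ((n + 1 : ℕ) * n.choose k : K) = (n + 1).choose (k + 1) * (k + 1 : ℕ) := by
    exact_mod_cast add_one_mul_choose_eq n k
  have h₂ : ((n + 2 : ℕ) * (n + 1).choose (k + 1) : K)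
      = (n + 2).choose (k + 2) * (k + 2 : ℕ) := by
    exact_mod_cast add_one_mul_choose_eq (n + 1) (k + 1)
  push_cast at h₁ h₂
  linear_combination -(k + 1 : K) * h₂ - (n + 2 : K) * h₁

end Nat

/-- Extended by zero to negative arguments, so that `Int.succ_mul_centralBinom_succ` holds for
every integer and the summand `C(2k,n) C(2k,k) C(2n-2k,n-k)` needs no case split at `k > n`. -/
def Int.centralBinom (m : ℤ) : ℕ := if 0 ≤ m then m.toNat.centralBinom else 0

namespace Int

@[simp]
theorem centralBinom_natCast (n : ℕ) : centralBinom n = n.centralBinom := by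
  simp [centralBinom]

theorem centralBinom_of_neg {m : ℤ} (hm : m < 0) : centralBinom m = 0 := by
  simp [centralBinom, hm.not_ge]

theorem succ_mul_centralBinom_succ (m : ℤ) :
    (m + 1) * centralBinom (m + 1) = 2 * (2 * m + 1) * centralBinom m := by
  rcases lt_trichotomy m (-1) with hm | rfl | hm
  · simp [centralBinom_of_neg (show m < 0 by omega),
      centralBinom_of_neg (show m + 1 < 0 by omega)]
  · simp [centralBinom_of_neg]
  · lift m to ℕ using (by omega)
    exact_mod_cast Nat.succ_mul_centralBinom_succ m

theorem cast_centralBinom_eq {K : Type*} [Field K] [CharZero K] (m : ℤ) :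
    (centralBinom m : K) = centralBinom (m + 1) * (m + 1) / (2 * (2 * m + 1)) := by
  have hm : (2 * (2 * m + 1) : K) ≠ 0 := by exact_mod_cast (show 2 * (2 * m + 1) ≠ 0 by omega)
  rw [eq_div_iff hm]
  norm_cast
  linarith [succ_mul_centralBinom_succ m]

end Int

section Recurrence

variable {A : Type*}

theorem eq_of_recurrence [Ring A] [NoZeroDivisors A] {a b c f g : ℕ → A} (ha : ∀ n, a n ≠ 0)
    (hf : ∀ n, a n * f (n + 2) = b n * f (n + 1) + c n * f n)
    (hg : ∀ n, a n * g (n + 2) = b n * g (n + 1) + c n * g n)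
    (h0 : f 0 = g 0) (h1 : f 1 = g 1) : f = g := by
  funext n
  induction n using Nat.twoStepInduction with
  | zero => exact h0
  | one => exact h1
  | more n ih₀ ih₁ => exact mul_left_cancel₀ (ha n) (by rw [hf, hg, ih₀, ih₁])

variable [CommRing A]

def rowSum (F : ℕ → ℕ → A) (n : ℕ) : A := ∑ k ∈ range (n + 1), F n k

theorem rowSum_eq_sum_range {F : ℕ → ℕ → A} (hF : ∀ n k, n < k → F n k = 0) {n N : ℕ}
    (hN : n < N) : rowSum F n = ∑ k ∈ range N, F n k :=
  sum_subset (range_subset_range.2 hN) fun k _ hk => hF n k (by simpa using hk)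

theorem rowSum_recurrence_of_certificate {F R : ℕ → ℕ → A} {a b c : ℕ → A}
    (hF : ∀ n k, n < k → F n k = 0) (hR : ∀ n, R n 0 * F (n + 2) 0 = 0)
    (hcert : ∀ n k, a n * F (n + 2) k = b n * F (n + 1) k + c n * F n k
      + (R n (k + 1) * F (n + 2) (k + 1) - R n k * F (n + 2) k)) (n : ℕ) :
    a n * rowSum F (n + 2) = b n * rowSum F (n + 1) + c n * rowSum F n := by
  have htele := sum_range_sub (fun k => R n k * F (n + 2) k) (n + 3)
  rw [hF (n + 2) (n + 3) (by omega), mul_zero, hR, sub_zero] at htele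
  rw [rowSum_eq_sum_range hF (N := n + 3) (by omega),
    rowSum_eq_sum_range hF (N := n + 3) (by omega), rowSum_eq_sum_range hF (N := n + 3) (by omega),
    mul_sum, mul_sum, mul_sum, sum_congr rfl fun k _ => hcert n k, sum_add_distrib,
    sum_add_distrib, htele, add_zero]

end Recurrence

def franelTerm (n k : ℕ) : ℚ := n.choose k ^ 3

-- The two certificates were found with Zeilberger's algorithm.
def franelCertificate (n k : ℕ) : ℚ :=
  k ^ 3 * (4 * k ^ 3 - 30 * k ^ 2 + 78 * k - 72 + n * (-18 * k ^ 2 + 93 * k - 128)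
    + n ^ 2 * (27 * k - 74) - 14 * n ^ 3) / ((n + 1) * (n + 2) ^ 3)

theorem franelTerm_certificate (n k : ℕ) :
    (n + 2) ^ 2 * franelTerm (n + 2) k = (7 * n ^ 2 + 21 * n + 16) * franelTerm (n + 1) k
      + 8 * (n + 1) ^ 2 * franelTerm n k
      + (franelCertificate n (k + 1) * franelTerm (n + 2) (k + 1)
        - franelCertificate n k * franelTerm (n + 2) k) := by
  simp only [franelTerm, franelCertificate]
  rw [Nat.cast_choose_eq_choose_succ n k, Nat.cast_choose_eq_choose_succ (n + 1) k,
    Nat.cast_choose_succ_right (n + 2) k]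
  push_cast
  field_simp
  ring

theorem franel_recurrence (n : ℕ) :
    (n + 2) ^ 2 * rowSum franelTerm (n + 2)
      = (7 * n ^ 2 + 21 * n + 16) * rowSum franelTerm (n + 1)
        + 8 * (n + 1) ^ 2 * rowSum franelTerm n :=
  rowSum_recurrence_of_certificate (R := franelCertificate)
    (fun n k hk => by simp [franelTerm, Nat.choose_eq_zero_of_lt hk])
    (fun n => by simp [franelCertificate]) franelTerm_certificate n

def centralBinomTerm (n k : ℕ) : ℚ :=
  (2 * k).choose n * k.centralBinom * Int.centralBinom (n - k)

/-- Every term of the certificate identity for `centralBinomTerm` is a rational multiple of this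
one, which vanishes only where they all do. -/
def centralBinomBase (n k : ℕ) : ℚ :=
  (2 * k).choose n * k.centralBinom * Int.centralBinom (n + 2 - k)

theorem centralBinomTerm_add_two_eq_mul_base (n k : ℕ) :
    centralBinomTerm (n + 2) k
      = (2 * k - n) / (n + 1) * ((2 * k - n - 1) / (n + 2)) * centralBinomBase n k := by
  rw [centralBinomTerm, centralBinomBase, Nat.cast_choose_succ_right (2 * k) (n + 1),
    Nat.cast_choose_succ_right]
  push_cast
  ring

theorem centralBinomTerm_succ_eq_mul_base (n k : ℕ) :
    centralBinomTerm (n + 1) k = (2 * k - n) / (n + 1)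
      * ((n + 2 - k) / (2 * (2 * n + 3 - 2 * k))) * centralBinomBase n k := by
  have hz := Int.cast_centralBinom_eq (K := ℚ) ((n : ℤ) + 1 - k)
  rw [show (n : ℤ) + 1 - k + 1 = n + 2 - k by ring] at hz
  rw [centralBinomTerm, centralBinomBase, Nat.cast_choose_succ_right]
  push_cast
  rw [hz]
  push_cast
  ring

theorem centralBinomTerm_eq_mul_base (n k : ℕ) :
    centralBinomTerm n k = (n + 1 - k) / (2 * (2 * n + 1 - 2 * k))
      * ((n + 2 - k) / (2 * (2 * n + 3 - 2 * k))) * centralBinomBase n k := by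
  have hz₀ := Int.cast_centralBinom_eq (K := ℚ) ((n : ℤ) - k)
  have hz₁ := Int.cast_centralBinom_eq (K := ℚ) ((n : ℤ) + 1 - k)
  rw [show (n : ℤ) - k + 1 = n + 1 - k by ring] at hz₀
  rw [show (n : ℤ) + 1 - k + 1 = n + 2 - k by ring] at hz₁
  rw [centralBinomTerm, centralBinomBase, hz₀, hz₁]
  push_cast
  ring

theorem centralBinomTerm_add_two_succ_eq_mul_base (n k : ℕ) :
    centralBinomTerm (n + 2) (k + 1) = (2 * k + 2) * (2 * k + 1) / ((n + 2) * (n + 1))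
      * (2 * (2 * k + 1) / (k + 1)) * ((n + 2 - k) / (2 * (2 * n + 3 - 2 * k)))
      * centralBinomBase n k := by
  have hz := Int.cast_centralBinom_eq (K := ℚ) ((n : ℤ) + 1 - k)
  rw [show (n : ℤ) + 1 - k + 1 = n + 2 - k by ring] at hz
  have hb : ((k + 1).centralBinom : ℚ) = k.centralBinom * (2 * (2 * k + 1)) / (k + 1) := by
    rw [eq_div_iff (Nat.cast_add_one_ne_zero k)]
    norm_cast
    linarith [Nat.succ_mul_centralBinom_succ k]
  rw [centralBinomTerm, centralBinomBase, show 2 * (k + 1) = 2 * k + 2 by ring,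
    Nat.cast_choose_add_two_add_two, hb, show ((n + 2 : ℕ) : ℤ) - (k + 1 : ℕ) = n + 1 - k by
      push_cast; ring, hz]
  push_cast
  field_simp
  ring

def centralBinomCertificate (n k : ℕ) : ℚ :=
  -(n + 2) * (8 * k ^ 4 - 56 * k ^ 3 + 106 * k ^ 2 - 68 * k + 14
    + n * (-28 * k ^ 3 + 96 * k ^ 2 - 75 * k + 17) + n ^ 2 * (20 * k ^ 2 - 20 * k + 5))
    / ((2 * k - 1) ^ 2 * (2 * n + 3 - 2 * k))

theorem centralBinomTerm_certificate (n k : ℕ) :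
    (n + 2) ^ 2 * centralBinomTerm (n + 2) k
      = 2 * (7 * n ^ 2 + 21 * n + 16) * centralBinomTerm (n + 1) k
      + 32 * (n + 1) ^ 2 * centralBinomTerm n k
      + (centralBinomCertificate n (k + 1) * centralBinomTerm (n + 2) (k + 1)
        - centralBinomCertificate n k * centralBinomTerm (n + 2) k) := by
  have hk : (2 * k - 1 : ℚ) ≠ 0 := by exact_mod_cast (show 2 * (k : ℤ) - 1 ≠ 0 by omega)
  have hd₁ : (2 * n + 1 - 2 * k : ℚ) ≠ 0 := by
    exact_mod_cast (show 2 * (n : ℤ) + 1 - 2 * k ≠ 0 by omega)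
  have hd₃ : (2 * n + 3 - 2 * k : ℚ) ≠ 0 := by
    exact_mod_cast (show 2 * (n : ℤ) + 3 - 2 * k ≠ 0 by omega)
  rw [centralBinomTerm_add_two_eq_mul_base, centralBinomTerm_succ_eq_mul_base,
    centralBinomTerm_eq_mul_base, centralBinomTerm_add_two_succ_eq_mul_base,
    centralBinomCertificate, centralBinomCertificate]
  push_cast
  rw [show 2 * ((k : ℚ) + 1) - 1 = 2 * k + 1 by ring,
    show 2 * (n : ℚ) + 3 - 2 * (k + 1) = 2 * n + 1 - 2 * k by ring]
  -- as atoms, the odd factors are seen by `field_simp` to be nonzero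
  generalize he₁ : (2 * n + 1 - 2 * k : ℚ) = d₁ at hd₁ ⊢
  generalize he₃ : (2 * n + 3 - 2 * k : ℚ) = d₃ at hd₃ ⊢
  field_simp
  subst he₁ he₃
  ring

theorem centralBinomTerm_recurrence (n : ℕ) :
    (n + 2) ^ 2 * rowSum centralBinomTerm (n + 2)
      = 2 * (7 * n ^ 2 + 21 * n + 16) * rowSum centralBinomTerm (n + 1)
        + 32 * (n + 1) ^ 2 * rowSum centralBinomTerm n :=
  rowSum_recurrence_of_certificate (R := centralBinomCertificate)
    (fun n k hk => by
      simp [centralBinomTerm, Int.centralBinom_of_neg (show (n : ℤ) - k < 0 by omega)])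
    (fun n => by simp [centralBinomTerm]) centralBinomTerm_certificate n

theorem rowSum_franelTerm (n : ℕ) :
    rowSum franelTerm n = ((∑ k ∈ range (n + 1), n.choose k ^ 3 : ℕ) : ℚ) := by
  simp [rowSum, franelTerm]

theorem rowSum_centralBinomTerm (n : ℕ) :
    rowSum centralBinomTerm n = ((∑ k ∈ range (n + 1),
      (2 * k).choose n * (2 * k).choose k * (2 * n - 2 * k).choose (n - k) : ℕ) : ℚ) := by
  push_cast
  refine sum_congr rfl fun k hk => ?_
  have hkn : k ≤ n := Nat.lt_succ_iff.1 (mem_range.1 hk)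
  rw [centralBinomTerm, ← Nat.cast_sub hkn, Int.centralBinom_natCast,
    Nat.centralBinom_eq_two_mul_choose, Nat.centralBinom_eq_two_mul_choose, Nat.mul_sub]

theorem stmt6 (n : ℕ) :
    2 ^ n * ∑ k ∈ Finset.range (n + 1), (n.choose k) ^ 3 =
      ∑ k ∈ Finset.range (n + 1),
        ((2 * k).choose n) * ((2 * k).choose k) * ((2 * n - 2 * k).choose (n - k)) := by
  have h : (fun n ↦ 2 ^ n * rowSum franelTerm n) = rowSum centralBinomTerm := by
    refine eq_of_recurrence (a := fun n ↦ ((n : ℚ) + 2) ^ 2) (fun n ↦ by positivity)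
      (fun n ↦ ?_) centralBinomTerm_recurrence ?_ ?_
    · linear_combination (2 : ℚ) ^ (n + 2) * franel_recurrence n
    · simp [rowSum, franelTerm, centralBinomTerm, Int.centralBinom]
    · norm_num [rowSum, franelTerm, centralBinomTerm, Int.centralBinom, Nat.centralBinom,
        sum_range_succ]
  have hn := congrFun h n
  rw [rowSum_franelTerm, rowSum_centralBinomTerm] at hn
  exact_mod_cast hn
end

section
/- For every natural number n, Σ_{k=0}^{n} C(n,k)³ = Σ_{k=0}^{n} C(n+2k,3k) · C(2k,k) · C(3k,k) · (-4)^{n-k} as an identity in ℤ. -/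
set_option maxHeartbeats 1000000
open Finset Nat


def Fq (n k : ℕ) : ℚ := ((n.choose k : ℚ))^3

def Nfp (n k : ℚ) : ℚ := k^3 * ((4+8*n+4*n^2)*k^3 + (-30-78*n-66*n^2-18*n^3)*k^2
  + (78+249*n+291*n^2+147*n^3+27*n^4)*k + (-72-272*n-402*n^2-290*n^3-102*n^4-14*n^5))

def Gf (n k : ℕ) : ℚ := Nfp n k * Fq n k / (((n:ℚ)+1-k)^3*((n:ℚ)+2-k)^3)

lemma absorb (m k : ℕ) : ((m:ℚ)+2) * ((m+k+2).choose k : ℚ) = ((m:ℚ)+(k:ℚ)+2) * ((m+k+1).choose k : ℚ) := by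
  have h := Nat.choose_mul_succ_eq (m+k+1) k
  have h2 : m+k+1+1-k = m+2 := by omega
  rw [h2] at h
  have := congrArg (fun x : ℕ => (x : ℚ)) h
  push_cast at this
  linarith

lemma stepF (m k : ℕ) :
    ((m+k+1:ℚ)+2)^2 * Fq (m+k+3) k - (7*(m+k+1:ℚ)^2+21*(m+k+1)+16) * Fq (m+k+2) k
      - 8*((m+k+1:ℚ)+1)^2 * Fq (m+k+1) k = Gf (m+k+1) (k+1) - Gf (m+k+1) k := by
  have nm1 : ((m:ℚ)+1) ≠ 0 := by positivity
  have nm2 : ((m:ℚ)+2) ≠ 0 := by positivity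
  have nm3 : ((m:ℚ)+3) ≠ 0 := by positivity
  have nk1 : ((k:ℚ)+1) ≠ 0 := by positivity
  have r1 : ((m+k+2).choose k : ℚ) = ((m:ℚ)+(k:ℚ)+2) * ((m+k+1).choose k : ℚ) / ((m:ℚ)+2) := by
    rw [eq_div_iff nm2]; linear_combination absorb m k
  have r2 : ((m+k+3).choose k : ℚ) = ((m:ℚ)+(k:ℚ)+3) * ((m+k+2).choose k : ℚ) / ((m:ℚ)+3) := by
    have h := absorb (m+1) k
    rw [show m+1+k+2 = m+k+3 from by omega, show m+1+k+1 = m+k+2 from by omega] at h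
    push_cast at h
    rw [eq_div_iff nm3]; linear_combination h
  have r3 : ((m+k+1).choose (k+1) : ℚ) = ((m:ℚ)+1) * ((m+k+1).choose k : ℚ) / ((k:ℚ)+1) := by
    have h := Nat.choose_succ_right_eq (m+k+1) k
    rw [show m+k+1-k = m+1 from by omega] at h
    have := congrArg (fun x : ℕ => (x : ℚ)) h
    push_cast at this
    rw [eq_div_iff nk1]; linarith
  have s1 : ((m+k+1:ℕ):ℚ)+1-((k:ℕ):ℚ) = (m:ℚ)+2 := by push_cast; ring
  have s2 : ((m+k+1:ℕ):ℚ)+2-((k:ℕ):ℚ) = (m:ℚ)+3 := by push_cast; ring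
  have s3 : ((m+k+1:ℕ):ℚ)+1-((k+1:ℕ):ℚ) = (m:ℚ)+1 := by push_cast; ring
  have s4 : ((m+k+1:ℕ):ℚ)+2-((k+1:ℕ):ℚ) = (m:ℚ)+2 := by push_cast; ring
  simp only [Fq, Gf, Nfp]
  rw [s1, s2, s3, s4, r2, r1, r3]
  push_cast
  field_simp
  ring


def Hq (n k : ℕ) : ℚ := ((n+2*k).choose (3*k) : ℚ) * (((2*k).choose k : ℚ)) * (((3*k).choose k : ℚ)) * (-4)^(n-k)

def Gh (n k : ℕ) : ℚ := -48*(3*(n:ℚ)+5) * (k:ℚ)^3 * Hq n k / (((n:ℚ)+1-k)*((n:ℚ)+2-k))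

lemma absorb2 (a b : ℕ) (h : b ≤ a) : ((a+1).choose b : ℚ) = ((a:ℚ)+1) * ((a.choose b : ℚ)) / ((a:ℚ)+1-b) := by
  have hd : ((a:ℚ)+1-b) ≠ 0 := by
    have : (b:ℚ) ≤ a := by exact_mod_cast h
    linarith
  rw [eq_div_iff hd]
  have hnat := Nat.choose_mul_succ_eq a b
  have := congrArg (fun x : ℕ => (x : ℚ)) hnat
  push_cast at this
  rw [Nat.cast_sub (by omega : b ≤ a+1)] at this
  push_cast at this
  linarith

lemma stepH (m k : ℕ) :
    ((m+k+1:ℚ)+2)^2 * Hq (m+k+3) k - (7*(m+k+1:ℚ)^2+21*(m+k+1)+16) * Hq (m+k+2) k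
      - 8*((m+k+1:ℚ)+1)^2 * Hq (m+k+1) k = Gh (m+k+1) (k+1) - Gh (m+k+1) k := by
  have nm1 : ((m:ℚ)+1) ≠ 0 := by positivity
  have nm2 : ((m:ℚ)+2) ≠ 0 := by positivity
  have nm3 : ((m:ℚ)+3) ≠ 0 := by positivity
  have nk1 : ((k:ℚ)+1) ≠ 0 := by positivity
  -- choose ratio lemmas
  have c1 : ((m+3*k+2).choose (3*k) : ℚ) = ((m:ℚ)+3*k+2) * ((m+3*k+1).choose (3*k) : ℚ) / ((m:ℚ)+2) := by
    have h := absorb2 (m+3*k+1) (3*k) (by omega)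
    rw [show m+3*k+1+1 = m+3*k+2 from by ring] at h
    rw [h]; push_cast; ring_nf
  have c2 : ((m+3*k+3).choose (3*k) : ℚ) = ((m:ℚ)+3*k+3) * ((m+3*k+2).choose (3*k) : ℚ) / ((m:ℚ)+3) := by
    have h := absorb2 (m+3*k+2) (3*k) (by omega)
    rw [show m+3*k+2+1 = m+3*k+3 from by ring] at h
    rw [h]; push_cast; ring_nf
  have fmk : ((m+3*k+3)! : ℚ) = ((m:ℚ)+3*k+3)*((m:ℚ)+3*k+2)*((m+3*k+1)! : ℚ) := by
    rw [show m+3*k+3 = (m+3*k+2)+1 from by ring, Nat.factorial_succ,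
        show m+3*k+2 = (m+3*k+1)+1 from by ring, Nat.factorial_succ]
    push_cast; ring
  have f3k : ((3*k+3)! : ℚ) = (3*(k:ℚ)+3)*(3*(k:ℚ)+2)*(3*(k:ℚ)+1)*((3*k)! : ℚ) := by
    rw [show 3*k+3 = (3*k+2)+1 from by ring, Nat.factorial_succ,
        show 3*k+2 = (3*k+1)+1 from by ring, Nat.factorial_succ,
        show 3*k+1 = (3*k)+1 from by ring, Nat.factorial_succ]
    push_cast; ring
  have f2k : ((2*k+2)! : ℚ) = (2*(k:ℚ)+2)*(2*(k:ℚ)+1)*((2*k)! : ℚ) := by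
    rw [show 2*k+2 = (2*k+1)+1 from by ring, Nat.factorial_succ,
        show 2*k+1 = (2*k)+1 from by ring, Nat.factorial_succ]
    push_cast; ring
  have fk1 : ((k+1)! : ℚ) = ((k:ℚ)+1)*((k)! : ℚ) := by
    rw [Nat.factorial_succ]; push_cast; ring
  have fm1 : ((m+1)! : ℚ) = ((m:ℚ)+1)*((m)! : ℚ) := by
    rw [Nat.factorial_succ]; push_cast; ring
  have nzf1 : ((3*k)! : ℚ) ≠ 0 := by positivity
  have nzf2 : ((2*k)! : ℚ) ≠ 0 := by positivity
  have nzf3 : ((k)! : ℚ) ≠ 0 := by positivity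
  have nzf4 : ((m)! : ℚ) ≠ 0 := by positivity
  have nzf5 : ((m+3*k+1)! : ℚ) ≠ 0 := by positivity
  have n3k1 : (3*(k:ℚ)+1) ≠ 0 := by positivity
  have n3k2 : (3*(k:ℚ)+2) ≠ 0 := by positivity
  have n2k1 : (2*(k:ℚ)+1) ≠ 0 := by positivity
  have e1 : ((m+3*k+3).choose (3*k+3) : ℚ)
      = ((m:ℚ)+3*k+3)*((m:ℚ)+3*k+2)*((m:ℚ)+1) * ((m+3*k+1).choose (3*k) : ℚ)
        / ((3*(k:ℚ)+1)*(3*(k:ℚ)+2)*(3*(k:ℚ)+3)) := by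
    rw [Nat.cast_choose ℚ (show 3*k+3 ≤ m+3*k+3 by omega),
        Nat.cast_choose ℚ (show 3*k ≤ m+3*k+1 by omega),
        show m+3*k+3-(3*k+3) = m from by omega,
        show m+3*k+1-3*k = m+1 from by omega, fmk, f3k, fm1]
    field_simp
  have e2 : ((2*k+2).choose (k+1) : ℚ)
      = (2*(k:ℚ)+1)*(2*(k:ℚ)+2) * ((2*k).choose k : ℚ) / (((k:ℚ)+1)^2) := by
    rw [Nat.cast_choose ℚ (show k+1 ≤ 2*k+2 by omega),
        Nat.cast_choose ℚ (show k ≤ 2*k by omega),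
        show 2*k+2-(k+1) = k+1 from by omega,
        show 2*k-k = k from by omega, f2k, fk1]
    field_simp
  have e3 : ((3*k+3).choose (k+1) : ℚ)
      = (3*(k:ℚ)+1)*(3*(k:ℚ)+2)*(3*(k:ℚ)+3) * ((3*k).choose k : ℚ)
        / (((k:ℚ)+1)*(2*(k:ℚ)+1)*(2*(k:ℚ)+2)) := by
    rw [Nat.cast_choose ℚ (show k+1 ≤ 3*k+3 by omega),
        Nat.cast_choose ℚ (show k ≤ 3*k by omega),
        show 3*k+3-(k+1) = 2*k+2 from by omega,
        show 3*k-k = 2*k from by omega, f3k, fk1, f2k]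
    field_simp
  -- now the main computation
  have s1 : ((m+k+1:ℕ):ℚ)+1-((k:ℕ):ℚ) = (m:ℚ)+2 := by push_cast; ring
  have s2 : ((m+k+1:ℕ):ℚ)+2-((k:ℕ):ℚ) = (m:ℚ)+3 := by push_cast; ring
  have s3 : ((m+k+1:ℕ):ℚ)+1-((k+1:ℕ):ℚ) = (m:ℚ)+1 := by push_cast; ring
  have s4 : ((m+k+1:ℕ):ℚ)+2-((k+1:ℕ):ℚ) = (m:ℚ)+2 := by push_cast; ring
  have p1 : ((-4:ℚ))^(m+1) = (-4)^m * (-4) := by rw [pow_succ]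
  have p2' : ((-4:ℚ))^(m+2) = (-4)^m * 16 := by rw [pow_add]; norm_num
  have p3 : ((-4:ℚ))^(m+3) = (-4)^m * (-64) := by rw [pow_add]; norm_num
  have np : ((-4:ℚ))^m ≠ 0 := by
    apply pow_ne_zero; norm_num
  simp only [Hq, Gh]
  rw [show m+k+1+2*k = m+3*k+1 from by ring, show m+k+2+2*k = m+3*k+2 from by ring,
      show m+k+3+2*k = m+3*k+3 from by ring,
      show m+k+1+2*(k+1) = m+3*k+3 from by ring,
      show 3*(k+1) = 3*k+3 from by ring,
      show 2*(k+1) = 2*k+2 from by ring,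
      show m+k+1-k = m+1 from by omega, show m+k+2-k = m+2 from by omega,
      show m+k+3-k = m+3 from by omega, show m+k+1-(k+1) = m from by omega,
      s1, s2, s3, s4, c2, c1, e1, e2, e3, p1, p2', p3]
  push_cast
  field_simp
  ring

lemma tailF (n : ℕ) :
    Gf n n + (((n:ℚ)+2)^2 * Fq (n+2) n - (7*(n:ℚ)^2+21*n+16) * Fq (n+1) n - 8*((n:ℚ)+1)^2 * Fq n n)
      + (((n:ℚ)+2)^2 * Fq (n+2) (n+1) - (7*(n:ℚ)^2+21*n+16) * Fq (n+1) (n+1) - 8*((n:ℚ)+1)^2 * Fq n (n+1))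
      + (((n:ℚ)+2)^2 * Fq (n+2) (n+2) - (7*(n:ℚ)^2+21*n+16) * Fq (n+1) (n+2) - 8*((n:ℚ)+1)^2 * Fq n (n+2)) = 0 := by
  have z1 : Fq n (n+1) = 0 := by simp [Fq, Nat.choose_eq_zero_of_lt]
  have z2 : Fq n (n+2) = 0 := by simp [Fq, Nat.choose_eq_zero_of_lt (by omega : n < n+2)]
  have z3 : Fq (n+1) (n+2) = 0 := by simp [Fq, Nat.choose_eq_zero_of_lt (by omega : n+1 < n+2)]
  have v1 : Fq n n = 1 := by simp [Fq]
  have v2 : Fq (n+1) (n+1) = 1 := by simp [Fq]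
  have v3 : Fq (n+2) (n+2) = 1 := by simp [Fq]
  have v4 : Fq (n+1) n = ((n:ℚ)+1)^3 := by
    rw [Fq, Nat.choose_succ_self_right]; push_cast; ring
  have v5 : Fq (n+2) (n+1) = ((n:ℚ)+2)^3 := by
    rw [Fq, Nat.choose_succ_self_right]; push_cast; ring
  have v6 : Fq (n+2) n = (((n:ℚ)+1)*((n:ℚ)+2)/2)^3 := by
    rw [Fq, Nat.cast_choose ℚ (show n ≤ n+2 by omega), show n+2-n = 2 from by omega,
        show n+2 = (n+1)+1 from rfl, Nat.factorial_succ, Nat.factorial_succ]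
    have nz : ((n)! : ℚ) ≠ 0 := by positivity
    rw [show ((2:ℕ)! : ℚ) = 2 from by norm_num [Nat.factorial]]
    push_cast
    field_simp
    ring
  have g : Gf n n = Nfp n n / 8 := by
    rw [Gf, v1, show ((n:ℚ)+1-(n:ℚ)) = 1 from by ring, show ((n:ℚ)+2-(n:ℚ)) = 2 from by ring]
    norm_num
  rw [g, z1, z2, z3, v1, v2, v3, v4, v5, v6, Nfp]
  field_simp
  ring

lemma tailH (n : ℕ) :
    Gh n n + (((n:ℚ)+2)^2 * Hq (n+2) n - (7*(n:ℚ)^2+21*n+16) * Hq (n+1) n - 8*((n:ℚ)+1)^2 * Hq n n)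
      + (((n:ℚ)+2)^2 * Hq (n+2) (n+1) - (7*(n:ℚ)^2+21*n+16) * Hq (n+1) (n+1) - 8*((n:ℚ)+1)^2 * Hq n (n+1))
      + (((n:ℚ)+2)^2 * Hq (n+2) (n+2) - (7*(n:ℚ)^2+21*n+16) * Hq (n+1) (n+2) - 8*((n:ℚ)+1)^2 * Hq n (n+2)) = 0 := by
  have nzZ : ((n)! : ℚ) ≠ 0 := by positivity
  have nzY : ((2*n)! : ℚ) ≠ 0 := by positivity
  have nzX : ((3*n)! : ℚ) ≠ 0 := by positivity
  -- factorial expansions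
  have fZ1 : ((n+1)! : ℚ) = ((n:ℚ)+1)*((n)! : ℚ) := by
    rw [Nat.factorial_succ]; push_cast; ring
  have fZ2 : ((n+2)! : ℚ) = ((n:ℚ)+2)*((n:ℚ)+1)*((n)! : ℚ) := by
    rw [show n+2 = (n+1)+1 from rfl, Nat.factorial_succ, Nat.cast_mul, fZ1]; push_cast; ring
  have fY1 : ((2*n+2)! : ℚ) = (2*(n:ℚ)+2)*(2*(n:ℚ)+1)*((2*n)! : ℚ) := by
    rw [show 2*n+2 = (2*n+1)+1 from by ring, Nat.factorial_succ,
        show 2*n+1 = (2*n)+1 from by ring, Nat.factorial_succ]; push_cast; ring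
  have fY2 : ((2*n+4)! : ℚ) = (2*(n:ℚ)+4)*(2*(n:ℚ)+3)*((2*n+2)! : ℚ) := by
    rw [show 2*n+4 = (2*n+3)+1 from by ring, Nat.factorial_succ,
        show 2*n+3 = (2*n+2)+1 from by ring, Nat.factorial_succ]; push_cast; ring
  have fX1 : ((3*n+2)! : ℚ) = (3*(n:ℚ)+2)*(3*(n:ℚ)+1)*((3*n)! : ℚ) := by
    rw [show 3*n+2 = (3*n+1)+1 from by ring, Nat.factorial_succ,
        show 3*n+1 = (3*n)+1 from by ring, Nat.factorial_succ]; push_cast; ring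
  have fX3 : ((3*n+3)! : ℚ) = (3*(n:ℚ)+3)*((3*n+2)! : ℚ) := by
    rw [show 3*n+3 = (3*n+2)+1 from by ring, Nat.factorial_succ]; push_cast; ring
  have fX6 : ((3*n+6)! : ℚ) = (3*(n:ℚ)+6)*(3*(n:ℚ)+5)*(3*(n:ℚ)+4)*((3*n+3)! : ℚ) := by
    rw [show 3*n+6 = (3*n+5)+1 from by ring, Nat.factorial_succ,
        show 3*n+5 = (3*n+4)+1 from by ring, Nat.factorial_succ,
        show 3*n+4 = (3*n+3)+1 from by ring, Nat.factorial_succ]; push_cast; ring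
  -- choose values
  have b1 : ((2*n).choose n : ℚ) = ((2*n)! : ℚ) / (((n)! : ℚ) * ((n)! : ℚ)) := by
    rw [Nat.cast_choose ℚ (show n ≤ 2*n by omega), show 2*n-n = n from by omega]
  have b2 : ((3*n).choose n : ℚ) = ((3*n)! : ℚ) / (((n)! : ℚ) * ((2*n)! : ℚ)) := by
    rw [Nat.cast_choose ℚ (show n ≤ 3*n by omega), show 3*n-n = 2*n from by omega]
  have b3 : ((2*n+2).choose (n+1) : ℚ) = ((2*n+2)! : ℚ) / (((n+1)! : ℚ) * ((n+1)! : ℚ)) := by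
    rw [Nat.cast_choose ℚ (show n+1 ≤ 2*n+2 by omega), show 2*n+2-(n+1) = n+1 from by omega]
  have b4 : ((3*n+3).choose (n+1) : ℚ) = ((3*n+3)! : ℚ) / (((n+1)! : ℚ) * ((2*n+2)! : ℚ)) := by
    rw [Nat.cast_choose ℚ (show n+1 ≤ 3*n+3 by omega), show 3*n+3-(n+1) = 2*n+2 from by omega]
  have b5 : ((2*n+4).choose (n+2) : ℚ) = ((2*n+4)! : ℚ) / (((n+2)! : ℚ) * ((n+2)! : ℚ)) := by
    rw [Nat.cast_choose ℚ (show n+2 ≤ 2*n+4 by omega), show 2*n+4-(n+2) = n+2 from by omega]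
  have b6 : ((3*n+6).choose (n+2) : ℚ) = ((3*n+6)! : ℚ) / (((n+2)! : ℚ) * ((2*n+4)! : ℚ)) := by
    rw [Nat.cast_choose ℚ (show n+2 ≤ 3*n+6 by omega), show 3*n+6-(n+2) = 2*n+4 from by omega]
  have b7 : ((3*n+2).choose (3*n) : ℚ) = (3*(n:ℚ)+2)*(3*(n:ℚ)+1)/2 := by
    rw [Nat.cast_choose ℚ (show 3*n ≤ 3*n+2 by omega), show 3*n+2-(3*n) = 2 from by omega,
        fX1, show ((2:ℕ)! : ℚ) = 2 from by norm_num [Nat.factorial]]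
    field_simp
  -- unfold all Hq occurrences
  simp only [Hq, Gh]
  rw [show n+2*n = 3*n from by ring, show n+1+2*n = 3*n+1 from by ring,
      show n+2+2*n = 3*n+2 from by ring,
      show n+2*(n+1) = 3*n+2 from by ring, show n+1+2*(n+1) = 3*n+3 from by ring,
      show n+2+2*(n+1) = 3*n+4 from by ring,
      show n+2*(n+2) = 3*n+4 from by ring, show n+1+2*(n+2) = 3*n+5 from by ring,
      show n+2+2*(n+2) = 3*n+6 from by ring,
      show 3*(n+1) = 3*n+3 from by ring, show 3*(n+2) = 3*n+6 from by ring,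
      show 2*(n+1) = 2*n+2 from by ring, show 2*(n+2) = 2*n+4 from by ring,
      show n-n = 0 from by omega, show n+1-n = 1 from by omega, show n+2-n = 2 from by omega,
      show n+1-(n+1) = 0 from by omega, show n+2-(n+1) = 1 from by omega,
      show n+2-(n+2) = 0 from by omega,
      show n-(n+1) = 0 from by omega, show n-(n+2) = 0 from by omega,
      show n+1-(n+2) = 0 from by omega]
  rw [Nat.choose_self, Nat.choose_self, Nat.choose_self,
      Nat.choose_succ_self_right, Nat.choose_succ_self_right,
      Nat.choose_eq_zero_of_lt (show 3*n+2 < 3*n+3 by omega),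
      Nat.choose_eq_zero_of_lt (show 3*n+4 < 3*n+6 by omega),
      Nat.choose_eq_zero_of_lt (show 3*n+5 < 3*n+6 by omega),
      b1, b2, b3, b4, b5, b6, b7,
      show ((n:ℚ)+1-(n:ℚ)) = 1 from by ring, show ((n:ℚ)+2-(n:ℚ)) = 2 from by ring,
      fZ2, fZ1, fY2, fY1, fX6, fX3, fX1]
  push_cast
  field_simp
  ring

def SF (n : ℕ) : ℚ := ∑ k ∈ range (n+1), Fq n k
def SH (n : ℕ) : ℚ := ∑ k ∈ range (n+1), Hq n k

lemma Fq_zero {n k : ℕ} (h : n < k) : Fq n k = 0 := by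
  simp [Fq, Nat.choose_eq_zero_of_lt h]

lemma Hq_zero {n k : ℕ} (h : n < k) : Hq n k = 0 := by
  have : n + 2*k < 3*k := by omega
  simp [Hq, Nat.choose_eq_zero_of_lt this]

lemma ext_sum (f : ℕ → ℚ) (n j : ℕ) (h : n+1 ≤ j) (hz : ∀ k, n < k → f k = 0) :
    ∑ k ∈ range j, f k = ∑ k ∈ range (n+1), f k := by
  apply (Finset.sum_subset (Finset.range_subset_range.mpr h) _).symm
  intro x hx hnx
  exact hz x (by simp at hx hnx; omega)

lemma Gf_zero (n : ℕ) : Gf n 0 = 0 := by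
  simp [Gf, Nfp]

lemma Gh_zero (n : ℕ) : Gh n 0 = 0 := by
  simp [Gh]

lemma recF (n : ℕ) :
    ((n:ℚ)+2)^2 * SF (n+2) = (7*(n:ℚ)^2+21*n+16) * SF (n+1) + 8*((n:ℚ)+1)^2 * SF n := by
  have key : ∑ k ∈ range (n+3),
      (((n:ℚ)+2)^2 * Fq (n+2) k - (7*(n:ℚ)^2+21*n+16) * Fq (n+1) k - 8*((n:ℚ)+1)^2 * Fq n k) = 0 := by
    rw [show n+3 = (n+2)+1 from rfl, Finset.sum_range_succ,
        show n+2 = (n+1)+1 from rfl, Finset.sum_range_succ, Finset.sum_range_succ]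
    have tele : ∑ k ∈ range n,
        (((n:ℚ)+2)^2 * Fq (n+2) k - (7*(n:ℚ)^2+21*n+16) * Fq (n+1) k - 8*((n:ℚ)+1)^2 * Fq n k)
        = Gf n n - Gf n 0 := by
      rw [← Finset.sum_range_sub (fun k => Gf n k) n]
      apply Finset.sum_congr rfl
      intro k hk
      have hk' : k < n := Finset.mem_range.mp hk
      obtain ⟨m, rfl⟩ : ∃ m, n = m+k+1 := ⟨n-k-1, by omega⟩
      have h := stepF m k
      push_cast at h ⊢
      linear_combination h
    rw [tele, Gf_zero]
    have h := tailF n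
    push_cast at h ⊢
    linarith
  have e2 : SF (n+2) = ∑ k ∈ range (n+3), Fq (n+2) k := rfl
  have e1 : SF (n+1) = ∑ k ∈ range (n+3), Fq (n+1) k :=
    (ext_sum _ (n+1) (n+3) (by omega) (fun k hk => Fq_zero hk)).symm
  have e0 : SF n = ∑ k ∈ range (n+3), Fq n k :=
    (ext_sum _ n (n+3) (by omega) (fun k hk => Fq_zero hk)).symm
  rw [e0, e1, e2]
  rw [Finset.sum_sub_distrib, Finset.sum_sub_distrib, ← Finset.mul_sum, ← Finset.mul_sum,
      ← Finset.mul_sum] at key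
  linarith

lemma recH (n : ℕ) :
    ((n:ℚ)+2)^2 * SH (n+2) = (7*(n:ℚ)^2+21*n+16) * SH (n+1) + 8*((n:ℚ)+1)^2 * SH n := by
  have key : ∑ k ∈ range (n+3),
      (((n:ℚ)+2)^2 * Hq (n+2) k - (7*(n:ℚ)^2+21*n+16) * Hq (n+1) k - 8*((n:ℚ)+1)^2 * Hq n k) = 0 := by
    rw [show n+3 = (n+2)+1 from rfl, Finset.sum_range_succ,
        show n+2 = (n+1)+1 from rfl, Finset.sum_range_succ, Finset.sum_range_succ]
    have tele : ∑ k ∈ range n,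
        (((n:ℚ)+2)^2 * Hq (n+2) k - (7*(n:ℚ)^2+21*n+16) * Hq (n+1) k - 8*((n:ℚ)+1)^2 * Hq n k)
        = Gh n n - Gh n 0 := by
      rw [← Finset.sum_range_sub (fun k => Gh n k) n]
      apply Finset.sum_congr rfl
      intro k hk
      have hk' : k < n := Finset.mem_range.mp hk
      obtain ⟨m, rfl⟩ : ∃ m, n = m+k+1 := ⟨n-k-1, by omega⟩
      have h := stepH m k
      push_cast at h ⊢
      linear_combination h
    rw [tele, Gh_zero]
    have h := tailH n
    push_cast at h ⊢
    linarith
  have e2 : SH (n+2) = ∑ k ∈ range (n+3), Hq (n+2) k := rfl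
  have e1 : SH (n+1) = ∑ k ∈ range (n+3), Hq (n+1) k :=
    (ext_sum _ (n+1) (n+3) (by omega) (fun k hk => Hq_zero hk)).symm
  have e0 : SH n = ∑ k ∈ range (n+3), Hq n k :=
    (ext_sum _ n (n+3) (by omega) (fun k hk => Hq_zero hk)).symm
  rw [e0, e1, e2]
  rw [Finset.sum_sub_distrib, Finset.sum_sub_distrib, ← Finset.mul_sum, ← Finset.mul_sum,
      ← Finset.mul_sum] at key
  linarith

lemma main_eq (n : ℕ) : SF n = SH n := by
  suffices h : ∀ n, SF n = SH n ∧ SF (n+1) = SH (n+1) from (h n).1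
  intro n
  induction n with
  | zero =>
    constructor
    · simp [SF, SH, Fq, Hq]
    · norm_num [SF, SH, Fq, Hq, Finset.sum_range_succ]
  | succ n ih =>
    refine ⟨ih.2, ?_⟩
    have hF := recF n
    have hH := recH n
    rw [ih.1, ih.2] at hF
    have hne : (((n:ℚ)+2)^2) ≠ 0 := by positivity
    have : ((n:ℚ)+2)^2 * SF (n+2) = ((n:ℚ)+2)^2 * SH (n+2) := by rw [hF, hH]
    exact mul_left_cancel₀ hne this

theorem stmt8 (n : ℕ) :
    (∑ k ∈ Finset.range (n + 1), ((n.choose k : ℤ)) ^ 3) =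
      ∑ k ∈ Finset.range (n + 1),
        ((n + 2 * k).choose (3 * k) : ℤ) * ((2 * k).choose k) * ((3 * k).choose k) *
          (-4) ^ (n - k) := by
  have h := main_eq n
  simp only [SF, SH, Fq, Hq] at h
  exact_mod_cast h
end

section
/- Define E(a,b,c) = Σ_{k=0}^{a+b-c} C(a,k)·C(b,c-a+k)·C(c,b-k) when c = max(a,b,c) (extended symmetrically to all arguments, and E = 0 when the triangle inequality fails). Then 2(a-b)·E(a,b,c) + (a-b+c+1)·E(a+1,b,c) + (a-b-c-1)·E(a,b+1,c) = 0 for all natural numbers a, b, c. -/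
open Finset

/-- The binomial sum for block derangements of three players,
when the third argument is the largest. The sum is automatically `0`
when the triangle inequality `c ≤ a + b` fails. -/
def Eaux (a b c : ℕ) : ℤ :=
  ∑ k ∈ Finset.range (a + b - c + 1),
    (a.choose k : ℤ) * (b.choose (c - a + k)) * (c.choose (b - k))

/-- The block derangement number `E(a,b,c)`: the binomial sum applied with the
largest argument placed last. -/
def E3 (a b c : ℕ) : ℤ :=
  if a ≤ c ∧ b ≤ c then Eaux a b c
  else if a ≤ b ∧ c ≤ b then Eaux a c b
  else Eaux b c a

/-! Extend `n.choose j` by zero to integers `j`. Then `E(a,b,c)` is the finitely supported sum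
over all `k : ℤ` of `C(a,k) C(b,c-a+k) C(c,b-k)`, and the reflections `k ↦ a - k` and
`k ↦ a + b - c - k` of the summation index show that this sum is symmetric in `a, b, c`, so it agrees
with `E3` whichever argument is largest. By Pascal's rule and absorption, the combination of
summands in the recurrence equals `(a - b) (t k - t (k - 1))` for the summand `t` of `E(a,b,c)`,
which telescopes to zero. -/

open Function

lemma finsum_sub_shift_eq_zero {M : Type*} [AddCommGroup M] {f : ℤ → M} (hf : HasFiniteSupport f) :
    ∑ᶠ k, (f k - f (k - 1)) = 0 := by
  rw [finsum_sub_distrib hf (hf.fun_comp_of_injective sub_left_injective), sub_eq_zero]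
  exact (finsum_comp_equiv (Equiv.subRight 1)).symm

def intChoose (n : ℕ) (j : ℤ) : ℤ := if 0 ≤ j then (n.choose j.toNat : ℤ) else 0

section intChoose

variable (n : ℕ)

lemma intChoose_of_neg {j : ℤ} (h : j < 0) : intChoose n j = 0 := by
  simp [intChoose, not_le.mpr h]

lemma intChoose_of_lt {j : ℤ} (h : (n : ℤ) < j) : intChoose n j = 0 := by
  rw [intChoose, if_pos (by omega), Nat.choose_eq_zero_of_lt (by omega), Nat.cast_zero]

@[simp]
lemma intChoose_natCast (m : ℕ) : intChoose n m = n.choose m := by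
  simp [intChoose]

lemma intChoose_symm (j : ℤ) : intChoose n (n - j) = intChoose n j := by
  rcases lt_or_ge j 0 with hj | hj
  · rw [intChoose_of_neg n hj, intChoose_of_lt n (by omega)]
  rcases le_or_gt j n with hjn | hjn
  · lift j to ℕ using hj
    rw [← Nat.cast_sub (by omega), intChoose_natCast, intChoose_natCast,
      Nat.choose_symm (by omega)]
  · rw [intChoose_of_neg n (by omega), intChoose_of_lt n hjn]

lemma intChoose_symm_of_eq_add {j j' : ℤ} (h : (n : ℤ) = j + j') :
    intChoose n j = intChoose n j' := by
  rw [← intChoose_symm n j', show (n : ℤ) - j' = j by omega]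

lemma intChoose_succ (j : ℤ) : intChoose (n + 1) j = intChoose n (j - 1) + intChoose n j := by
  rcases lt_or_ge j 1 with hj | hj
  · rcases lt_or_ge j 0 with hj0 | hj0
    · simp [intChoose_of_neg, hj0, show j - 1 < 0 by omega]
    · obtain rfl : j = 0 := by omega
      simp [intChoose]
  · obtain ⟨m, rfl⟩ : ∃ m : ℕ, j = m + 1 := ⟨(j - 1).toNat, by omega⟩
    rw [add_sub_cancel_right, ← Nat.cast_succ, intChoose_natCast, intChoose_natCast,
      intChoose_natCast]
    exact_mod_cast Nat.choose_succ_succ n m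

lemma succ_mul_intChoose_succ (j : ℤ) :
    (j + 1) * intChoose n (j + 1) = (n - j) * intChoose n j := by
  rcases lt_or_ge j 0 with hj | hj
  · rcases eq_or_lt_of_le (show j + 1 ≤ 0 by omega) with h | h
    · simp [h, intChoose_of_neg n hj]
    · simp [intChoose_of_neg n h, intChoose_of_neg n hj]
  lift j to ℕ using hj
  rcases le_or_gt j n with hjn | hjn
  · have := Nat.choose_succ_right_eq n j
    rw [← Nat.cast_succ, intChoose_natCast, intChoose_natCast, ← Nat.cast_sub hjn]
    norm_cast
    linarith
  · rw [intChoose_of_lt n (by omega), intChoose_of_lt n (by omega)]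
    ring

end intChoose

def blockTerm (a b c : ℕ) (k : ℤ) : ℤ :=
  intChoose a k * intChoose b (c + k - a) * intChoose c (b - k)

noncomputable def blockSum (a b c : ℕ) : ℤ := ∑ᶠ k : ℤ, blockTerm a b c k

section blockSum

variable (a b c : ℕ)

lemma support_blockTerm_subset : support (blockTerm a b c) ⊆ Set.Icc 0 ((a : ℤ) + b - c) := by
  intro k hk
  by_contra h
  rw [Set.mem_Icc, not_and_or, not_le, not_le] at h
  rcases h with h | h
  · exact hk (by rw [blockTerm, intChoose_of_neg a h, zero_mul, zero_mul])
  · exact hk (by rw [blockTerm, intChoose_of_lt b (by omega), mul_zero, zero_mul])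

@[fun_prop]
lemma hasFiniteSupport_blockTerm : HasFiniteSupport (blockTerm a b c) :=
  (Set.finite_Icc _ _).subset (support_blockTerm_subset a b c)

lemma blockSum_right_comm : blockSum a c b = blockSum a b c := by
  rw [blockSum, ← finsum_comp_equiv (Equiv.subLeft (a : ℤ))]
  refine finsum_congr fun k => ?_
  rw [Equiv.subLeft_apply, blockTerm, blockTerm,
    intChoose_symm_of_eq_add a (by ring : (a : ℤ) = a - k + k),
    show (b : ℤ) + (a - k) - a = b - k by ring, show (c : ℤ) - (a - k) = c + k - a by ring]
  ring

lemma blockSum_comm : blockSum b a c = blockSum a b c := by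
  rw [blockSum, ← finsum_comp_equiv (Equiv.subLeft ((a : ℤ) + b - c))]
  refine finsum_congr fun k => ?_
  rw [Equiv.subLeft_apply, blockTerm, blockTerm,
    intChoose_symm_of_eq_add b (by ring : (b : ℤ) = a + b - c - k + (c + k - a)),
    intChoose_symm_of_eq_add a (by ring : (a : ℤ) = c + (a + b - c - k) - b + k),
    intChoose_symm_of_eq_add c (by ring : (c : ℤ) = a - (a + b - c - k) + (b - k))]
  ring

end blockSum

lemma blockSum_eq_Eaux {a b c : ℕ} (ha : a ≤ c) : blockSum a b c = Eaux a b c := by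
  rw [blockSum, Eaux, finsum_eq_sum_of_support_subset _
    (s := (range (a + b - c + 1)).map Nat.castEmbedding), sum_map]
  · refine sum_congr rfl fun k hk => ?_
    rw [mem_range] at hk
    rw [Nat.castEmbedding_apply, blockTerm, intChoose_natCast,
      show (c : ℤ) + k - a = ((c - a + k : ℕ) : ℤ) by omega, intChoose_natCast,
      show (b : ℤ) - k = ((b - k : ℕ) : ℤ) by omega, intChoose_natCast]
  · intro k hk
    obtain ⟨hk0, hk1⟩ := support_blockTerm_subset a b c hk
    simp only [coe_map, Set.mem_image, coe_range, Set.mem_Iio, Nat.castEmbedding_apply]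
    exact ⟨k.toNat, by omega, by omega⟩

lemma E3_eq_blockSum (a b c : ℕ) : E3 a b c = blockSum a b c := by
  unfold E3
  split_ifs with hc hb
  · exact (blockSum_eq_Eaux hc.1).symm
  · rw [← blockSum_eq_Eaux hb.1, blockSum_right_comm]
  · rw [← blockSum_eq_Eaux (by omega : b ≤ a), blockSum_right_comm, blockSum_comm]

lemma blockTerm_recurrence (a b c : ℕ) (k : ℤ) :
    2 * ((a : ℤ) - b) * blockTerm a b c k + ((a : ℤ) - b + c + 1) * blockTerm (a + 1) b c k +
      ((a : ℤ) - b - c - 1) * blockTerm a (b + 1) c k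
      = ((a : ℤ) - b) * (blockTerm a b c k - blockTerm a b c (k - 1)) := by
  simp only [blockTerm, Nat.cast_succ]
  rw [intChoose_succ a k, intChoose_succ b,
    show (c : ℤ) + k - (a + 1) = c + k - a - 1 by ring, show (b : ℤ) + 1 - k = b - k + 1 by ring,
    show (c : ℤ) + (k - 1) - a = c + k - a - 1 by ring, show (b : ℤ) - (k - 1) = b - k + 1 by ring]
  have ha := succ_mul_intChoose_succ a (k - 1)
  have hb := succ_mul_intChoose_succ b (c + k - a - 1)
  have hc := succ_mul_intChoose_succ c (b - k)
  rw [sub_add_cancel] at ha hb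
  linear_combination
    (-(intChoose b (c + k - a - 1) * intChoose c (b - k))
      - intChoose b (c + k - a - 1) * intChoose c (b - k + 1)) * ha +
    (-(intChoose a k * intChoose c (b - k)) - intChoose a k * intChoose c (b - k + 1)) * hb +
    (-2 * (intChoose a k * intChoose b (c + k - a - 1)) - intChoose a k * intChoose b (c + k - a)
      - intChoose a (k - 1) * intChoose b (c + k - a - 1)) * hc

lemma blockSum_recurrence (a b c : ℕ) :
    2 * ((a : ℤ) - b) * blockSum a b c + ((a : ℤ) - b + c + 1) * blockSum (a + 1) b c +
      ((a : ℤ) - b - c - 1) * blockSum a (b + 1) c = 0 := by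
  simp only [blockSum, mul_finsum]
  rw [← finsum_add_distrib, ← finsum_add_distrib]
  · rw [finsum_congr (blockTerm_recurrence a b c), ← mul_finsum,
      finsum_sub_shift_eq_zero (hasFiniteSupport_blockTerm a b c), mul_zero]
  all_goals fun_prop

theorem stmt9 (a b c : ℕ) :
    2 * ((a : ℤ) - b) * E3 a b c + ((a : ℤ) - b + c + 1) * E3 (a + 1) b c +
      ((a : ℤ) - b - c - 1) * E3 a (b + 1) c = 0 := by
  simpa only [E3_eq_blockSum] using blockSum_recurrence a b c
end

section
/- For natural numbers n₁,...,n_S, Σ_{k₁=0}^{n₁} ··· Σ_{k_S=0}^{n_S} C(n₁,k₁)···C(n_S,k_S)·E(k₁,...,k_S) = (n₁+...+n_S)! / (n₁!···n_S!), where E is the block derangement count and E(0,...,0)=1. -/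
open Finset

/-- The number of block derangements: ways to deal the pooled cards
(player `j` originally holds `n j` cards) so that each player `j` receives
exactly `n j` cards and no player receives a card he originally held. -/
def blockDerangements (S : ℕ) (n : Fin S → ℕ) : ℕ :=
  Fintype.card {f : (Σ j : Fin S, Fin (n j)) → Fin S //
    (∀ c : Σ j : Fin S, Fin (n j), f c ≠ c.1) ∧
    ∀ j : Fin S, Fintype.card {c : Σ j : Fin S, Fin (n j) // f c = j} = n j}

/-!
Both sides count the ways to redeal the pooled cards so that every player `j` gets `n j` cards
back. Directly, such a redeal is a permutation of the cards up to permutations within each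
player's hand, which gives the multinomial coefficient. Alternatively, record the set of cards
that change hands, `k j` of them from player `j` (in `C(n j, k j)` ways); on that set the redeal is
a block derangement, and the number of block derangements only depends on the block sizes `k`.
-/

open Equiv
open scoped Nat

section Deals

variable {α β ι : Type*} [Fintype α] [DecidableEq α] [Fintype β] [DecidableEq β]
  [Fintype ι] [DecidableEq ι]

/-- Card `a` is originally held by `o a` and is dealt to `f a`. -/
def deals (o : α → ι) : Finset (α → ι) :=
  {f | ∀ j, Fintype.card {a // f a = j} = Fintype.card {a // o a = j}}

def derangedDeals (o : α → ι) : Finset (α → ι) :=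
  {f ∈ deals o | ∀ a, f a ≠ o a}

lemma mem_deals {o f : α → ι} :
    f ∈ deals o ↔ ∀ j, Fintype.card {a // f a = j} = Fintype.card {a // o a = j} := by
  simp [deals]

lemma mem_derangedDeals {o f : α → ι} :
    f ∈ derangedDeals o ↔ f ∈ deals o ∧ ∀ a, f a ≠ o a :=
  mem_filter

lemma comp_perm_mem_deals (o : α → ι) (σ : Perm α) : o ∘ σ ∈ deals o :=
  mem_deals.2 fun _ => Fintype.card_congr (σ.subtypeEquiv fun _ => Iff.rfl)

lemma exists_perm_comp_eq_of_mem_deals {o f : α → ι} (hf : f ∈ deals o) :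
    ∃ σ : Perm α, o ∘ σ = f :=
  ⟨ofFiberEquiv fun j => Fintype.equivOfCardEq (mem_deals.1 hf j), funext (ofFiberEquiv_map _)⟩

omit [Fintype ι] in
lemma card_filter_perm_comp_eq (o : α → ι) (τ : Perm α) :
    #{σ : Perm α | o ∘ σ = o ∘ τ} = #{σ : Perm α | o ∘ σ = o} := by
  refine card_equiv (Equiv.mulRight τ⁻¹) fun σ => ?_
  simp only [mem_filter, mem_univ, true_and, coe_mulRight, Perm.coe_mul]
  constructor
  · intro h; ext a; simpa using congrFun h (τ⁻¹ a)
  · intro h; ext a; simpa using congrFun h (τ a)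

/-- `σ ↦ o ∘ σ` maps the permutations onto the deals, each fibre being a coset of the
stabiliser of `o`. -/
theorem card_deals_mul_prod_factorial (o : α → ι) :
    #(deals o) * ∏ j, (Fintype.card {a // o a = j})! = (Fintype.card α)! := by
  have card_fiber : ∀ f ∈ deals o,
      #{σ : Perm α | o ∘ σ = f} = ∏ j, (Fintype.card {a // o a = j})! := by
    intro f hf
    obtain ⟨τ, rfl⟩ := exists_perm_comp_eq_of_mem_deals hf
    rw [card_filter_perm_comp_eq, ← DomMulAct.stabilizer_card, Fintype.card_subtype]
  rw [← Fintype.card_perm, ← card_univ,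
    card_eq_sum_card_fiberwise fun σ _ => comp_perm_mem_deals o σ, sum_congr rfl card_fiber,
    sum_const, smul_eq_mul]

omit [Fintype α] [DecidableEq α] in
lemma card_subtype_coe_finset (s : Finset α) (p : α → Prop) [DecidablePred p] :
    Fintype.card {a : s // p a} = #{a ∈ s | p a} := by
  rw [Fintype.card_subtype, ← card_map (Function.Embedding.subtype _)]
  congr 1
  ext a
  simp [and_comm]

omit [Fintype ι] in
lemma card_subtype_eq_iff_of_eqOn_compl {f o : α → ι} {s : Finset α} (h : ∀ a ∉ s, f a = o a)
    (j : ι) : Fintype.card {a // f a = j} = Fintype.card {a // o a = j} ↔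
      Fintype.card {a : s // f a = j} = Fintype.card {a : s // o a = j} := by
  have split (g : α → ι) : Fintype.card {a // g a = j} =
      Fintype.card {a : s // g a = j} + #{a | g a = j ∧ a ∉ s} := by
    rw [card_subtype_coe_finset s (g · = j), Fintype.card_subtype,
      ← card_filter_add_card_filter_not (· ∈ s), filter_comm, filter_univ_mem, filter_filter]
  have outside : #{a | f a = j ∧ a ∉ s} = #{a | o a = j ∧ a ∉ s} :=
    congrArg card (filter_congr fun a _ => and_congr_left fun ha => by rw [h a ha])
  rw [split f, split o, outside, Nat.add_right_cancel_iff]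

lemma card_deals_filter_moved_eq (o : α → ι) (s : Finset α) :
    #{f ∈ deals o | ({a | f a ≠ o a} : Finset α) = s} = #(derangedDeals fun a : s => o a) := by
  set extend : (s → ι) → α → ι := fun g a => if h : a ∈ s then g ⟨a, h⟩ else o a
  have extend_of_mem (g : s → ι) (a : s) : extend g a = g a := dif_pos a.2
  have extend_of_notMem (g : s → ι) {a : α} (ha : a ∉ s) : extend g a = o a := dif_neg ha
  have moved_iff {f : α → ι} (hf : ({a | f a ≠ o a} : Finset α) = s) (a : α) :
      a ∈ s ↔ f a ≠ o a := by simp [← hf]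
  have eq_of_notMem {f : α → ι} (hf : ({a | f a ≠ o a} : Finset α) = s) :
      ∀ a ∉ s, f a = o a := fun a ha => not_not.1 (mt (moved_iff hf a).2 ha)
  refine card_nbij' (fun f a => f a) extend ?_ ?_ ?_ ?_
  · intro f hf
    obtain ⟨hdeal, hs⟩ := mem_filter.1 (mem_coe.1 hf)
    exact mem_derangedDeals.2 ⟨mem_deals.2 fun j =>
      (card_subtype_eq_iff_of_eqOn_compl (eq_of_notMem hs) j).1 (mem_deals.1 hdeal j),
      fun a => (moved_iff hs a).1 a.2⟩
  · intro g hg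
    obtain ⟨hdeal, hderanged⟩ := mem_derangedDeals.1 (mem_coe.1 hg)
    refine mem_filter.2 ⟨mem_deals.2 fun j =>
      (card_subtype_eq_iff_of_eqOn_compl (fun a => extend_of_notMem g) j).2 ?_, ?_⟩
    · simpa only [extend_of_mem] using mem_deals.1 hdeal j
    · ext a
      by_cases ha : a ∈ s
      · simpa [ha, extend_of_mem g ⟨a, ha⟩] using hderanged ⟨a, ha⟩
      · simp [ha, extend_of_notMem g ha]
  · intro f hf
    funext a
    by_cases ha : a ∈ s
    · exact extend_of_mem (fun b : s => f b) ⟨a, ha⟩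
    · exact (extend_of_notMem (fun b : s => f b) ha).trans
        (eq_of_notMem (mem_filter.1 (mem_coe.1 hf)).2 a ha).symm
  · intro g _
    funext a
    exact extend_of_mem g a

theorem card_deals_eq_sum_card_derangedDeals (o : α → ι) :
    #(deals o) = ∑ s : Finset α, #(derangedDeals fun a : s => o a) := by
  rw [card_eq_sum_card_fiberwise (f := fun f => ({a | f a ≠ o a} : Finset α)) (t := univ)
    fun _ _ => mem_coe.2 (mem_univ _)]
  exact sum_congr rfl fun s _ => card_deals_filter_moved_eq o s

lemma card_derangedDeals_congr {o : α → ι} {o' : β → ι} (e : α ≃ β) (h : ∀ a, o' (e a) = o a) :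
    #(derangedDeals o) = #(derangedDeals o') := by
  refine card_equiv (e.arrowCongr (Equiv.refl ι)) fun f => ?_
  have hf (j : ι) : Fintype.card {b // f (e.symm b) = j} = Fintype.card {a // f a = j} :=
    Fintype.card_congr (e.symm.subtypeEquiv fun _ => by simp)
  have ho (j : ι) : Fintype.card {b // o' b = j} = Fintype.card {a // o a = j} :=
    Fintype.card_congr (e.symm.subtypeEquiv fun b => by rw [← h, apply_symm_apply])
  simp only [mem_derangedDeals, mem_deals, arrowCongr_apply, coe_refl, id_eq,
    Function.comp_apply, hf, ho, e.symm.forall_congr_left, symm_symm, symm_apply_apply, h]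

theorem card_derangedDeals_eq_of_card_fiber_eq {o : α → ι} {o' : β → ι}
    (h : ∀ j, Fintype.card {a // o a = j} = Fintype.card {b // o' b = j}) :
    #(derangedDeals o) = #(derangedDeals o') :=
  card_derangedDeals_congr (ofFiberEquiv fun j => Fintype.equivOfCardEq (h j)) (ofFiberEquiv_map _)

end Deals

section Sigma

variable {ι : Type*} [Fintype ι] [DecidableEq ι]

lemma card_subtype_sigma_fst (n : ι → ℕ) (j : ι) :
    Fintype.card {c : Σ i, Fin (n i) // c.1 = j} = n j := by
  rw [Fintype.card_congr (Equiv.sigmaSubtype j), Fintype.card_fin]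

theorem card_deals_sigma_fst (n : ι → ℕ) :
    #(deals (Sigma.fst : (Σ i, Fin (n i)) → ι)) = Nat.multinomial univ n := by
  have h := card_deals_mul_prod_factorial (Sigma.fst : (Σ i, Fin (n i)) → ι)
  simp only [card_subtype_sigma_fst, Fintype.card_sigma, Fintype.card_fin] at h
  rw [← Nat.multinomial_spec, mul_comm] at h
  exact Nat.eq_of_mul_eq_mul_left (prod_pos fun i _ => Nat.factorial_pos _) h

variable {β : ι → Type*}

lemma card_subtype_univ_sigma_fst (t : ∀ i, Finset (β i)) (j : ι) :
    Fintype.card {c : univ.sigma t // c.1.1 = j} = #(t j) := by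
  rw [card_subtype_coe_finset (univ.sigma t) fun c => c.1 = j]
  have : ({c ∈ univ.sigma t | c.1 = j} : Finset (Σ i, β i)) = ({j} : Finset ι).sigma t := by
    ext ⟨i, x⟩; simp [and_comm]
  rw [this, card_sigma, sum_singleton]

def piFinsetEquivFinsetSigma [∀ i, Fintype (β i)] [∀ i, DecidableEq (β i)] :
    (∀ i, Finset (β i)) ≃ Finset (Σ i, β i) where
  toFun t := univ.sigma t
  invFun s i := {x | ⟨i, x⟩ ∈ s}
  left_inv t := by ext; simp
  right_inv s := by ext ⟨i, x⟩; simp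

theorem sum_pi_finset_eq_sum_prod_choose_smul [∀ i, Fintype (β i)] {M : Type*}
    [AddCommMonoid M] (F : (ι → ℕ) → M) :
    ∑ t : ∀ i, Finset (β i), F (fun i => #(t i)) =
      ∑ k ∈ Fintype.piFinset (fun i => range (Fintype.card (β i) + 1)),
        (∏ i, (Fintype.card (β i)).choose (k i)) • F k := by
  have maps : ∀ t ∈ (univ : Finset (∀ i, Finset (β i))),
      (fun i => #(t i)) ∈ Fintype.piFinset (fun i => range (Fintype.card (β i) + 1)) :=
    fun t _ => Fintype.mem_piFinset.2 fun i => mem_range_succ_iff.2 (card_le_univ _)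
  rw [← sum_fiberwise_of_maps_to maps]
  refine sum_congr rfl fun k _ => ?_
  have fiber : ({t | (fun i => #(t i)) = k} : Finset (∀ i, Finset (β i))) =
      Fintype.piFinset fun i => powersetCard (k i) univ := by
    ext t; simp [funext_iff]
  rw [sum_congr rfl fun t ht => by rw [(mem_filter.1 ht).2], sum_const, fiber,
    Fintype.card_piFinset]
  simp only [card_powersetCard, card_univ]

end Sigma

lemma blockDerangements_eq_card_derangedDeals (S : ℕ) (n : Fin S → ℕ) :
    blockDerangements S n = #(derangedDeals (Sigma.fst : (Σ j : Fin S, Fin (n j)) → Fin S)) := by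
  rw [blockDerangements, Fintype.card_subtype]
  congr 1
  ext f
  simp [mem_derangedDeals, mem_deals, card_subtype_sigma_fst, and_comm]

theorem stmt13 (S : ℕ) (n : Fin S → ℕ) :
    ∑ k ∈ Fintype.piFinset (fun j => Finset.range (n j + 1)),
        (∏ j, (n j).choose (k j)) * blockDerangements S k =
      Nat.multinomial Finset.univ n := by
  have restricted (t : ∀ j, Finset (Fin (n j))) :
      #(derangedDeals fun c : univ.sigma t => c.1.1) = blockDerangements S fun j => #(t j) := by
    rw [blockDerangements_eq_card_derangedDeals]
    exact card_derangedDeals_eq_of_card_fiber_eq fun j => by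
      rw [card_subtype_univ_sigma_fst, card_subtype_sigma_fst]
  rw [← card_deals_sigma_fst, card_deals_eq_sum_card_derangedDeals,
    ← Fintype.sum_equiv piFinsetEquivFinsetSigma _ _ fun t => (restricted t).symm,
    sum_pi_finset_eq_sum_prod_choose_smul]
  simp only [Fintype.card_fin, smul_eq_mul]
end

section
/- Define B(m₁,...,m_S) = Σ_{ℓ₁=0}^{m₁-1} ··· Σ_{ℓ_S=0}^{m_S-1} (ℓ₁+...+ℓ_S)! / (ℓ₁!···ℓ_S!), with B(m₁,...,m_S) = 0 whenever some argument equals 0. Then for positive integers m₁,...,m_S, B(m₁,...,m_S) = Σ_{j=1}^{S} B(m₁,...,m_j - 1,...,m_S) + 1. -/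
open Finset

open Nat in
lemma multinomial_rec (S : ℕ) (ℓ : Fin S → ℕ) (h : ℓ ≠ 0) :
    Nat.multinomial Finset.univ ℓ =
      ∑ j, if ℓ j ≠ 0 then
        Nat.multinomial Finset.univ (Function.update ℓ j (ℓ j - 1)) else 0 := by
  have hsum : 0 < ∑ i, ℓ i := by
    rcases Function.ne_iff.mp h with ⟨j, hj⟩
    exact lt_of_lt_of_le (Nat.pos_of_ne_zero hj) (Finset.single_le_sum (fun i _ => Nat.zero_le _) (mem_univ j))
  have hP : 0 < ∏ i, (ℓ i)! := Finset.prod_pos fun i _ => Nat.factorial_pos _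
  refine Nat.eq_of_mul_eq_mul_left hP ?_
  rw [Nat.multinomial_spec, Finset.mul_sum]
  have key : ∀ j : Fin S,
      (∏ i, (ℓ i)!) * (if ℓ j ≠ 0 then
        Nat.multinomial Finset.univ (Function.update ℓ j (ℓ j - 1)) else 0)
      = ℓ j * ((∑ i, ℓ i) - 1)! := by
    intro j
    by_cases hj : ℓ j = 0
    · simp [hj]
    rw [if_pos hj]
    have h1 : ∑ i, Function.update ℓ j (ℓ j - 1) i = (∑ i, ℓ i) - 1 := by
      rw [Finset.sum_update_of_mem (mem_univ j)]
      have := Finset.sum_update_of_mem (mem_univ j) ℓ (ℓ j)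
      rw [Function.update_eq_self] at this
      omega
    have h2 : ∏ i, (ℓ i)! = ℓ j * ∏ i, (Function.update ℓ j (ℓ j - 1) i)! := by
      rw [show (∏ i, (Function.update ℓ j (ℓ j - 1) i)!) =
          ∏ i, (Function.update (fun i => (ℓ i)!) j ((ℓ j - 1)!)) i from
        Finset.prod_congr rfl (fun i _ => by
          rcases eq_or_ne i j with rfl | hij
          · simp
          · simp [Function.update_of_ne hij]),
        Finset.prod_update_of_mem (mem_univ j), ← mul_assoc,
        Nat.mul_factorial_pred hj]
      have := Finset.prod_update_of_mem (mem_univ j) (fun i => (ℓ i)!) ((ℓ j)!)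
      rw [Function.update_eq_self] at this
      rw [← this]
    rw [h2, mul_assoc, Nat.multinomial_spec, h1]
  rw [Finset.sum_congr rfl (fun j _ => key j), ← Finset.sum_mul,
    Nat.mul_factorial_pred hsum.ne']

/-- `B(m₁,...,m_S)`: the sum of the multinomial coefficients
`(ℓ₁+⋯+ℓ_S)!/(ℓ₁!⋯ℓ_S!)` over all `0 ≤ ℓ_j ≤ m_j - 1`.
It is `0` whenever some `m j = 0`. -/
def B (S : ℕ) (m : Fin S → ℕ) : ℕ :=
  ∑ ℓ ∈ Fintype.piFinset (fun j => Finset.range (m j)),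
    Nat.multinomial Finset.univ ℓ

theorem stmt15 (S : ℕ) (m : Fin S → ℕ) (hm : ∀ j, 1 ≤ m j) :
    B S m = (∑ j, B S (Function.update m j (m j - 1))) + 1 := by
  classical
  have h0 : (0 : Fin S → ℕ) ∈ Fintype.piFinset (fun j => Finset.range (m j)) := by
    simp only [Fintype.mem_piFinset, Pi.zero_apply, Finset.mem_range]
    exact fun j => hm j
  have hM0 : Nat.multinomial (Finset.univ : Finset (Fin S)) 0 = 1 := by
    simp [Nat.multinomial]
  have step1 : B S m =
      (∑ ℓ ∈ (Fintype.piFinset (fun j => Finset.range (m j))).erase 0,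
        Nat.multinomial Finset.univ ℓ) + 1 := by
    rw [B, ← Finset.sum_erase_add _ _ h0, hM0]
  rw [step1]
  congr 1
  calc (∑ ℓ ∈ (Fintype.piFinset (fun j => Finset.range (m j))).erase 0,
        Nat.multinomial Finset.univ ℓ)
      = ∑ ℓ ∈ (Fintype.piFinset (fun j => Finset.range (m j))).erase 0,
          ∑ j, (if ℓ j ≠ 0 then
            Nat.multinomial Finset.univ (Function.update ℓ j (ℓ j - 1)) else 0) := by
        refine Finset.sum_congr rfl fun ℓ hℓ => ?_
        exact multinomial_rec S ℓ (Finset.ne_of_mem_erase hℓ)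
    _ = ∑ j, ∑ ℓ ∈ (Fintype.piFinset (fun j => Finset.range (m j))).erase 0,
          (if ℓ j ≠ 0 then
            Nat.multinomial Finset.univ (Function.update ℓ j (ℓ j - 1)) else 0) :=
        Finset.sum_comm
    _ = ∑ j, ∑ ℓ ∈ Fintype.piFinset (fun j => Finset.range (m j)),
          (if ℓ j ≠ 0 then
            Nat.multinomial Finset.univ (Function.update ℓ j (ℓ j - 1)) else 0) := by
        refine Finset.sum_congr rfl fun j _ => ?_
        exact Finset.sum_erase _ (by simp)
    _ = ∑ j, B S (Function.update m j (m j - 1)) := by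
        refine Finset.sum_congr rfl fun j _ => ?_
        rw [Finset.sum_ite, Finset.sum_const, smul_zero, add_zero, B]
        refine Finset.sum_bij' (fun ℓ _ => Function.update ℓ j (ℓ j - 1))
          (fun ℓ _ => Function.update ℓ j (ℓ j + 1)) ?_ ?_ ?_ ?_ ?_
        · intro ℓ hℓ
          simp only [Finset.mem_filter, Fintype.mem_piFinset, Finset.mem_range] at hℓ ⊢
          intro k
          rcases eq_or_ne k j with rfl | hk
          · simp only [Function.update_self]
            have := hℓ.1 k
            have := hℓ.2
            omega
          · rw [Function.update_of_ne hk, Function.update_of_ne hk]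
            exact hℓ.1 k
        · intro ℓ hℓ
          simp only [Fintype.mem_piFinset, Finset.mem_range] at hℓ
          simp only [Finset.mem_filter, Fintype.mem_piFinset, Finset.mem_range]
          constructor
          · intro k
            rcases eq_or_ne k j with rfl | hk
            · simp only [Function.update_self]
              have := hℓ k
              rw [Function.update_self] at this
              have := hm k
              omega
            · rw [Function.update_of_ne hk]
              have := hℓ k
              rwa [Function.update_of_ne hk] at this
          · simp
        · intro ℓ hℓ
          simp only [Finset.mem_filter] at hℓ
          funext k
          rcases eq_or_ne k j with rfl | hk
          · simp only [Function.update_self]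
            have := hℓ.2
            omega
          · simp [Function.update_of_ne hk]
        · intro ℓ hℓ
          funext k
          rcases eq_or_ne k j with rfl | hk
          · simp
          · simp [Function.update_of_ne hk]
        · intro ℓ hℓ
          rfl
end

section
/- For natural numbers a ≥ 0 and positive integers j, c, Σ_{i=0}^{a-1} (i+j+c)!/(i!·j!·c!) = a·(a+j+c)! / ((j+c+1)·a!·j!·c!). -/
open Finset

/-- The telescoping (Gosper) form of the hockey-stick identity `∑_{i<a} C(i+m, m) = C(a+m, m+1)`. -/
theorem sum_range_factorial_add_div_factorial (m a : ℕ) :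
    ∑ i ∈ range a, ((i + m).factorial : ℚ) / i.factorial =
      a * (a + m).factorial / ((m + 1) * a.factorial) := by
  induction a with
  | zero => simp
  | succ n ih =>
    rw [sum_range_succ, ih, Nat.succ_add, Nat.factorial_succ (n + m), Nat.factorial_succ n]
    push_cast
    field_simp
    ring

theorem stmt18_general (a j c : ℕ) :
    ∑ i ∈ Finset.range a,
        ((i + j + c).factorial : ℚ) / (i.factorial * j.factorial * c.factorial) =
      (a : ℚ) * ((a + j + c).factorial : ℚ) /
        (((j : ℚ) + c + 1) * a.factorial * j.factorial * c.factorial) := by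
  have key := sum_range_factorial_add_div_factorial (j + c) a
  simp only [← add_assoc, Nat.cast_add] at key
  simp only [mul_assoc, ← div_div, ← sum_div, key]

theorem stmt18 (a j c : ℕ) (hj : 1 ≤ j) (hc : 1 ≤ c) :
    ∑ i ∈ Finset.range a,
        ((i + j + c).factorial : ℚ) / (i.factorial * j.factorial * c.factorial) =
      (a : ℚ) * ((a + j + c).factorial : ℚ) /
        (((j : ℚ) + c + 1) * a.factorial * j.factorial * c.factorial) :=
  stmt18_general a j c
end
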